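/- Let K, L be convex bodies in ℝ³ containing the origin in their interiors, with relative quermassintegrals W₀, W₁, W₂, W₃ of K with respect to L. If K is in the class ℜ₂ with respect to L, then for every t ≥ 0 the body K + tL is also in the class ℜ₂ with respect to L; explicitly, if B₁(r) = 2W₂ r − W₁ − W₃ r² ≥ 0 for all r ∈ [r_o(K,L), R_o(K,L)], then 2W₂ᵗ r − W₁ᵗ − W₃ᵗ r² ≥ 0 for all r ∈ [r_o(K+tL, L), R_o(K+tL, L)], where Wᵢᵗ = Σ_{k=0}^{3−i} C(3−i,k) W_{i+k} t^k are the relative quermassintegrals of K + tL with respect to L. -/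
import Mathlib

open scoped Pointwise RealInnerProductSpace
open MeasureTheory Metric

noncomputable section

/-- The support function `h_K(u) = sup_{x ∈ K} ⟪x, u⟫` of a set `K ⊆ ℝ³`. -/
def supp (K : Set (EuclideanSpace ℝ (Fin 3))) (u : EuclideanSpace ℝ (Fin 3)) : ℝ :=
  sSup ((fun x => ⟪x, u⟫) '' K)

/-- `r_o(K,L) = min_{u ∈ S²} h_K(u)/h_L(u)`. -/
def rIn (K L : Set (EuclideanSpace ℝ (Fin 3))) : ℝ :=
  sInf ((fun u => supp K u / supp L u) '' sphere (0 : EuclideanSpace ℝ (Fin 3)) 1)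

/-- `R_o(K,L) = max_{u ∈ S²} h_K(u)/h_L(u)`. -/
def rOut (K L : Set (EuclideanSpace ℝ (Fin 3))) : ℝ :=
  sSup ((fun u => supp K u / supp L u) '' sphere (0 : EuclideanSpace ℝ (Fin 3)) 1)

lemma inner_continuous (u : EuclideanSpace ℝ (Fin 3)) :
    Continuous fun x : EuclideanSpace ℝ (Fin 3) => ⟪x, u⟫ :=
  continuous_id.inner continuous_const

/-- additivity of the support function on a Minkowski sum with a scaled set -/
lemma supp_add_smul (K L : Set (EuclideanSpace ℝ (Fin 3)))
    (hKc : IsCompact K) (hKne : K.Nonempty) (hLc : IsCompact L) (hLne : L.Nonempty)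
    {t : ℝ} (ht : 0 ≤ t) (u : EuclideanSpace ℝ (Fin 3)) :
    supp (K + t • L) u = supp K u + t * supp L u := by
  have himg : (fun x => ⟪x, u⟫) '' (K + t • L)
      = ((fun x => ⟪x, u⟫) '' K) + t • ((fun x => ⟪x, u⟫) '' L) := by
    ext y
    constructor
    · rintro ⟨x, hx, rfl⟩
      rw [Set.mem_add] at hx
      obtain ⟨a, ha, b, hb, rfl⟩ := hx
      obtain ⟨c, hc, rfl⟩ := hb
      refine Set.mem_add.2 ⟨⟪a, u⟫, ⟨a, ha, rfl⟩, t * ⟪c, u⟫, ⟨⟪c, u⟫, ⟨c, hc, rfl⟩, rfl⟩, ?_⟩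
      simp [inner_add_left, real_inner_smul_left, Finset.mul_sum, mul_assoc]
    · intro hy
      rw [Set.mem_add] at hy
      obtain ⟨p, ⟨a, ha, rfl⟩, q, ⟨q', ⟨c, hc, rfl⟩, rfl⟩, rfl⟩ := hy
      refine ⟨a + t • c, Set.mem_add.2 ⟨a, ha, t • c, ⟨c, hc, rfl⟩, rfl⟩, ?_⟩
      simp [inner_add_left, real_inner_smul_left, Finset.mul_sum, mul_assoc]
  have hAc : IsCompact ((fun x => ⟪x, u⟫) '' K) := hKc.image (inner_continuous u)
  have hBc : IsCompact ((fun x => ⟪x, u⟫) '' L) := hLc.image (inner_continuous u)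
  have hBc' : IsCompact (t • ((fun x => ⟪x, u⟫) '' L)) := hBc.smul t
  rw [supp, himg,
    csSup_add (hKne.image _) hAc.bddAbove ((hLne.image _).smul_set) hBc'.bddAbove,
    Real.sSup_smul_of_nonneg ht, smul_eq_mul]
  rfl

/-- If `K` is in the class `ℜ₂` with respect to `L`, then for every `t ≥ 0` the
outer parallel body `K + tL` is also in the class `ℜ₂` with respect to `L`, whose relative
quermassintegrals are `Wᵢᵗ = ∑_{k=0}^{3-i} C(3-i,k) W_{i+k} t^k`. -/
theorem class_R2_implies_parallel_body_R2
    (K L : Set (EuclideanSpace ℝ (Fin 3)))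
    (hKc : IsCompact K) (hKconv : Convex ℝ K) (hKint : (interior K).Nonempty)
    (hLc : IsCompact L) (hLconv : Convex ℝ L) (hLint : (interior L).Nonempty)
    (hK0 : (0 : EuclideanSpace ℝ (Fin 3)) ∈ interior K)
    (hL0 : (0 : EuclideanSpace ℝ (Fin 3)) ∈ interior L)
    (W₀ W₁ W₂ W₃ : ℝ)
    (hW : ∀ t : ℝ, 0 ≤ t →
      (volume (K + t • L)).toReal = W₀ + 3 * W₁ * t + 3 * W₂ * t ^ 2 + W₃ * t ^ 3)
    (hR2 : ∀ r ∈ Set.Icc (rIn K L) (rOut K L), 2 * W₂ * r - W₁ - W₃ * r ^ 2 ≥ 0) :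
    ∀ t : ℝ, 0 ≤ t →
      ∀ r ∈ Set.Icc (rIn (K + t • L) L) (rOut (K + t • L) L),
        2 * (W₂ + W₃ * t) * r - (W₁ + 2 * W₂ * t + W₃ * t ^ 2) - W₃ * r ^ 2 ≥ 0 := by
  intro t ht r hr
  have hKne : K.Nonempty := ⟨0, interior_subset hK0⟩
  have hLne : L.Nonempty := ⟨0, interior_subset hL0⟩
  -- lower bound ε for sets with 0 in the interior
  have lower : ∀ (M : Set (EuclideanSpace ℝ (Fin 3))), IsCompact M →
      (0 : EuclideanSpace ℝ (Fin 3)) ∈ interior M →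
      ∃ ε > 0, ∀ u ∈ sphere (0 : EuclideanSpace ℝ (Fin 3)) 1, ε ≤ supp M u := by
    intro M hMc hM0
    rw [mem_interior_iff_mem_nhds] at hM0
    obtain ⟨ε, hε, hball⟩ := Metric.mem_nhds_iff.1 hM0
    refine ⟨ε / 2, by positivity, fun u hu => ?_⟩
    have hu1 : ‖u‖ = 1 := by simpa using hu
    have hx : (ε / 2) • u ∈ M := by
      apply hball
      rw [mem_ball_zero_iff, norm_smul, hu1, mul_one, Real.norm_eq_abs,
        abs_of_nonneg (by positivity)]
      linarith
    have hbdd : BddAbove ((fun x => ⟪x, u⟫) '' M) := (hMc.image (inner_continuous u)).bddAbove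
    have : ⟪(ε / 2) • u, u⟫ = ε / 2 := by
      rw [real_inner_smul_left, real_inner_self_eq_norm_sq, hu1]
      ring
    calc ε / 2 = ⟪(ε / 2) • u, u⟫ := this.symm
      _ ≤ supp M u := le_csSup hbdd ⟨_, hx, rfl⟩
  obtain ⟨εK, hεK, hKlow⟩ := lower K hKc hK0
  obtain ⟨εL, hεL, hLlow⟩ := lower L hLc hL0
  -- upper bound R for compact sets
  obtain ⟨RK, hRK, hKRsub⟩ := hKc.isBounded.subset_closedBall_lt 0 0
  have hKup : ∀ u ∈ sphere (0 : EuclideanSpace ℝ (Fin 3)) 1, supp K u ≤ RK := by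
    intro u hu
    have hu1 : ‖u‖ = 1 := by simpa using hu
    apply Real.sSup_le _ hRK.le
    rintro y ⟨x, hx, rfl⟩
    calc ⟪x, u⟫ ≤ ‖x‖ * ‖u‖ := real_inner_le_norm x u
      _ = ‖x‖ := by rw [hu1, mul_one]
      _ ≤ RK := by simpa using hKRsub hx
  -- the image set over the sphere for K
  set S : Set ℝ := (fun u => supp K u / supp L u) '' sphere (0 : EuclideanSpace ℝ (Fin 3)) 1
    with hS
  have hSphNe : (sphere (0 : EuclideanSpace ℝ (Fin 3)) 1).Nonempty :=
    NormedSpace.sphere_nonempty.2 zero_le_one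
  have hSne : S.Nonempty := hSphNe.image _
  have hSbddBelow : BddBelow S := by
    refine ⟨0, ?_⟩
    rintro y ⟨u, hu, rfl⟩
    have h1 := hKlow u hu; have h2 := hLlow u hu
    exact div_nonneg (by linarith) (by linarith)
  have hSbddAbove : BddAbove S := by
    refine ⟨RK / εL, ?_⟩
    rintro y ⟨u, hu, rfl⟩
    exact div_le_div₀ hRK.le (hKup u hu) hεL (hLlow u hu)
  -- the image set for K + tL is the translate of S by t
  have key : ((fun u => supp (K + t • L) u / supp L u) ''
      sphere (0 : EuclideanSpace ℝ (Fin 3)) 1) = (fun x => x + t) '' S := by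
    rw [hS, Set.image_image]
    apply Set.image_congr
    intro u hu
    have hLpos : (0 : ℝ) < supp L u := lt_of_lt_of_le hεL (hLlow u hu)
    rw [supp_add_smul K L hKc hKne hLc hLne ht u, add_div, mul_div_assoc,
      div_self hLpos.ne', mul_one]
  have hcoe : (fun x : ℝ => x + t) '' S = ⇑(OrderIso.addRight t) '' S := rfl
  have hIn : rIn (K + t • L) L = rIn K L + t := by
    rw [rIn, key, hcoe, ← (OrderIso.addRight t).map_csInf' hSne hSbddBelow]
    rfl
  have hOut : rOut (K + t • L) L = rOut K L + t := by
    rw [rOut, key, hcoe, ← (OrderIso.addRight t).map_csSup' hSne hSbddAbove]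
    rfl
  rw [hIn] at hr
  rw [hOut] at hr
  have h := hR2 (r - t) ⟨by linarith [hr.1], by linarith [hr.2]⟩
  have : 2 * (W₂ + W₃ * t) * r - (W₁ + 2 * W₂ * t + W₃ * t ^ 2) - W₃ * r ^ 2
      = 2 * W₂ * (r - t) - W₁ - W₃ * (r - t) ^ 2 := by ring
  rw [this]
  exact h
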